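/- Let u¹, u² ∈ ℝ with u² ≠ 0 and D := (u²)² − u¹u² > 0; set R = √D, λ¹ = 2u² − u¹ + 2R, λ² = 2u² − u¹ − 2R, and 𝒥 = [[−1 − u²/R, 2 + (2u² − u¹)/R],[−1 + u²/R, 2 − (2u² − u¹)/R]]. Define f¹, f² as the diagonal entries of 𝒥 g₁ 𝒥ᵀ with g₁ = [[−2u², −u²],[−u², 0]], and assume f¹ ≠ 0 and f² ≠ 0. Define the matrices A₁ = 𝒥[[0, −u²/2],[u²/2, 0]]𝒥ᵀ, A₂ = 𝒥[[0, u¹u²/2],[−u¹u²/2, 0]]𝒥ᵀ, B₁ = 𝒥[[−u²/3, −u²/6],[−u²/6, 0]]𝒥ᵀ, B₂ = 𝒥[[0, u¹u²/6],[u¹u²/6, (u²)²/3]]𝒥ᵀ. Then for each i ∈ {1,2}, with j the other index, the central invariant cᵢ = (1/(3(fⁱ)²)) · ( (B₂)ᵢᵢ − λⁱ(B₁)ᵢᵢ + ((A₂)ⱼᵢ − λⁱ(A₁)ⱼᵢ)² / (fʲ(λʲ − λⁱ)) ) equals 1/24. That is, both central invariants of the bihamiltonian structure (𝒫₁, 𝒫₂)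 of the Ablowitz–Ladik hierarchy are equal to 1/24. -/

import Mathlib

/-!
In canonical coordinates the `ε²∂ₓ³` contribution `(B₂)ᵢᵢ - λⁱ(B₁)ᵢᵢ` to each central invariant
vanishes identically, because `R² = (u²)² - u¹u²`. The `ε∂ₓ²` coefficients are skew, and the
congruence `S ↦ J S Jᵀ` multiplies a skew `2 × 2` matrix by `det J = -2u¹/R`; with
`u¹u² = (u² - R)(u² + R)` the remaining term is `(u² ± R)⁴ / (2R²)`, which is `1/24` of
`3(fⁱ)² = 12(u² ± R)⁴ / R²`.
-/

open scoped Matrix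

theorem Matrix.mul_skew_mul_transpose_fin_two {α : Type*} [CommRing α]
    (J : Matrix (Fin 2) (Fin 2) α) {a b : α} (hab : b = -a) :
    J * !![0, a; b, 0] * Jᵀ = J.det • !![0, a; b, 0] := by
  subst hab
  ext i j
  fin_cases i <;> fin_cases j <;>
    simp [Matrix.mul_apply, Fin.sum_univ_two, Matrix.det_fin_two] <;> ring

theorem Matrix.mul_mul_transpose_apply_self_fin_two {α : Type*} [CommRing α]
    (J M : Matrix (Fin 2) (Fin 2) α) (i : Fin 2) :
    (J * M * Jᵀ) i i =
      M 0 0 * J i 0 ^ 2 + (M 0 1 + M 1 0) * J i 0 * J i 1 + M 1 1 * J i 1 ^ 2 := by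
  simp only [Matrix.mul_apply, Matrix.transpose_apply, Fin.sum_univ_two]
  ring

/- In canonical coordinates: `metric` is `g₁`, `coeff12` and `coeff23` are the coefficients of
`ε∂ₓ²` and `ε²∂ₓ³`, and `pencil` is `𝒫₂ - λⁱ𝒫₁`. -/
namespace AblowitzLadik

/-- The Jacobian of the canonical coordinates `2u² - u¹ ± 2R` with respect to `(u¹, u²)`. -/
noncomputable def jacobian (u1 u2 R : ℝ) : Matrix (Fin 2) (Fin 2) ℝ :=
  !![-1 - u2 / R, 2 + (2 * u2 - u1) / R; -1 + u2 / R, 2 - (2 * u2 - u1) / R]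

variable {u1 u2 R lam1 lam2 : ℝ} {J : Matrix (Fin 2) (Fin 2) ℝ}

theorem jacobian_det (hJ : J = jacobian u1 u2 R) :
    J.det = -2 * u1 / R := by
  rw [hJ, jacobian, Matrix.det_fin_two_of]
  ring

theorem metric_apply_zero_zero
    (hJ : J = jacobian u1 u2 R) (hR : R ≠ 0) (hR2 : R ^ 2 = u2 ^ 2 - u1 * u2) :
    (J * !![-2 * u2, -u2; -u2, 0] * Jᵀ) 0 0 = 2 * (u2 + R) ^ 2 / R := by
  simp only [Matrix.mul_mul_transpose_apply_self_fin_two, hJ, jacobian, Matrix.of_apply,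
    Matrix.cons_val', Matrix.cons_val_zero, Matrix.cons_val_one, Matrix.cons_val_fin_one]
  field_simp
  linear_combination (-2 * (R + u2)) * hR2

theorem metric_apply_one_one
    (hJ : J = jacobian u1 u2 R) (hR : R ≠ 0) (hR2 : R ^ 2 = u2 ^ 2 - u1 * u2) :
    (J * !![-2 * u2, -u2; -u2, 0] * Jᵀ) 1 1 = -2 * (u2 - R) ^ 2 / R := by
  simp only [Matrix.mul_mul_transpose_apply_self_fin_two, hJ, jacobian, Matrix.of_apply,
    Matrix.cons_val', Matrix.cons_val_zero, Matrix.cons_val_one, Matrix.cons_val_fin_one]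
  field_simp
  linear_combination (2 * (R - u2)) * hR2

theorem coeff23_pencil_apply_zero_zero
    (hJ : J = jacobian u1 u2 R) (hR : R ≠ 0) (hR2 : R ^ 2 = u2 ^ 2 - u1 * u2) (hlam1 : lam1 = 2 * u2 - u1 + 2 * R) :
    (J * !![0, u1 * u2 / 6; u1 * u2 / 6, u2 ^ 2 / 3] * Jᵀ) 0 0
      - lam1 * (J * !![-u2 / 3, -u2 / 6; -u2 / 6, 0] * Jᵀ) 0 0 = 0 := by
  simp only [Matrix.mul_mul_transpose_apply_self_fin_two, hJ, jacobian, hlam1, Matrix.of_apply,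
    Matrix.cons_val', Matrix.cons_val_zero, Matrix.cons_val_one, Matrix.cons_val_fin_one]
  field_simp
  linear_combination 6 * u2 * (u1 - 2 * u2 - 2 * R) * hR2

theorem coeff23_pencil_apply_one_one
    (hJ : J = jacobian u1 u2 R) (hR : R ≠ 0) (hR2 : R ^ 2 = u2 ^ 2 - u1 * u2) (hlam2 : lam2 = 2 * u2 - u1 - 2 * R) :
    (J * !![0, u1 * u2 / 6; u1 * u2 / 6, u2 ^ 2 / 3] * Jᵀ) 1 1
      - lam2 * (J * !![-u2 / 3, -u2 / 6; -u2 / 6, 0] * Jᵀ) 1 1 = 0 := by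
  simp only [Matrix.mul_mul_transpose_apply_self_fin_two, hJ, jacobian, hlam2, Matrix.of_apply,
    Matrix.cons_val', Matrix.cons_val_zero, Matrix.cons_val_one, Matrix.cons_val_fin_one]
  field_simp
  linear_combination 6 * u2 * (u1 - 2 * u2 + 2 * R) * hR2

theorem coeff12_pencil_apply_one_zero
    (hJ : J = jacobian u1 u2 R) (hR2 : R ^ 2 = u2 ^ 2 - u1 * u2) (hlam1 : lam1 = 2 * u2 - u1 + 2 * R) :
    (J * !![0, u1 * u2 / 2; -u1 * u2 / 2, 0] * Jᵀ) 1 0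
      - lam1 * (J * !![0, -u2 / 2; u2 / 2, 0] * Jᵀ) 1 0 = 2 * (u2 - R) * (u2 + R) ^ 2 / R := by
  rw [Matrix.mul_skew_mul_transpose_fin_two J (by ring),
    Matrix.mul_skew_mul_transpose_fin_two J (by ring),
    jacobian_det hJ, hlam1]
  simp only [Matrix.smul_apply, Matrix.of_apply, Matrix.cons_val', Matrix.cons_val_zero,
    Matrix.cons_val_one, Matrix.cons_val_fin_one, smul_eq_mul]
  linear_combination 2 * (u2 + R) / R * hR2

theorem coeff12_pencil_apply_zero_one
    (hJ : J = jacobian u1 u2 R) (hR2 : R ^ 2 = u2 ^ 2 - u1 * u2) (hlam2 : lam2 = 2 * u2 - u1 - 2 * R) :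
    (J * !![0, u1 * u2 / 2; -u1 * u2 / 2, 0] * Jᵀ) 0 1
      - lam2 * (J * !![0, -u2 / 2; u2 / 2, 0] * Jᵀ) 0 1 = -2 * (u2 + R) * (u2 - R) ^ 2 / R := by
  rw [Matrix.mul_skew_mul_transpose_fin_two J (by ring),
    Matrix.mul_skew_mul_transpose_fin_two J (by ring),
    jacobian_det hJ, hlam2]
  simp only [Matrix.smul_apply, Matrix.of_apply, Matrix.cons_val', Matrix.cons_val_zero,
    Matrix.cons_val_one, Matrix.cons_val_fin_one, smul_eq_mul]
  linear_combination -2 * (u2 - R) / R * hR2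

end AblowitzLadik

theorem central_invariants_P1_P2_eq_one_div_24
    (u1 u2 : ℝ) (hD : u2 ^ 2 - u1 * u2 > 0)
    (R : ℝ) (hR : R = Real.sqrt (u2 ^ 2 - u1 * u2))
    (lam1 lam2 : ℝ)
    (hlam1 : lam1 = 2 * u2 - u1 + 2 * R) (hlam2 : lam2 = 2 * u2 - u1 - 2 * R)
    (g1 J : Matrix (Fin 2) (Fin 2) ℝ)
    (hg1 : g1 = !![-2 * u2, -u2; -u2, 0])
    (hJ : J = !![-1 - u2 / R, 2 + (2 * u2 - u1) / R;
                 -1 + u2 / R, 2 - (2 * u2 - u1) / R])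
    (f1 f2 : ℝ)
    (hf1 : f1 = (J * g1 * J.transpose) 0 0) (hf2 : f2 = (J * g1 * J.transpose) 1 1)
    (hf1ne : f1 ≠ 0) (hf2ne : f2 ≠ 0)
    (A1 A2 B1 B2 : Matrix (Fin 2) (Fin 2) ℝ)
    (hA1 : A1 = J * !![0, -u2 / 2; u2 / 2, 0] * J.transpose)
    (hA2 : A2 = J * !![0, u1 * u2 / 2; -u1 * u2 / 2, 0] * J.transpose)
    (hB1 : B1 = J * !![-u2 / 3, -u2 / 6; -u2 / 6, 0] * J.transpose)
    (hB2 : B2 = J * !![0, u1 * u2 / 6; u1 * u2 / 6, u2 ^ 2 / 3] * J.transpose) :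
    (1 / (3 * f1 ^ 2)) *
        (B2 0 0 - lam1 * B1 0 0 + (A2 1 0 - lam1 * A1 1 0) ^ 2 / (f2 * (lam2 - lam1))) =
      1 / 24 ∧
    (1 / (3 * f2 ^ 2)) *
        (B2 1 1 - lam2 * B1 1 1 + (A2 0 1 - lam2 * A1 0 1) ^ 2 / (f1 * (lam1 - lam2))) =
      1 / 24 := by
  have hR0 : R ≠ 0 := (hR ▸ Real.sqrt_pos.mpr hD).ne'
  have hR2 : R ^ 2 = u2 ^ 2 - u1 * u2 := by rw [hR, Real.sq_sqrt hD.le]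
  subst hg1 hA1 hA2 hB1 hB2
  rw [AblowitzLadik.metric_apply_zero_zero hJ hR0 hR2] at hf1
  rw [AblowitzLadik.metric_apply_one_one hJ hR0 hR2] at hf2
  have hplus : u2 + R ≠ 0 := by rintro h; simp [hf1, h] at hf1ne
  have hminus : u2 - R ≠ 0 := by rintro h; simp [hf2, h] at hf2ne
  have hgap21 : lam2 - lam1 = -4 * R := by rw [hlam1, hlam2]; ring
  have hgap12 : lam1 - lam2 = 4 * R := by rw [hlam1, hlam2]; ring
  rw [AblowitzLadik.coeff23_pencil_apply_zero_zero hJ hR0 hR2 hlam1,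
    AblowitzLadik.coeff23_pencil_apply_one_one hJ hR0 hR2 hlam2,
    AblowitzLadik.coeff12_pencil_apply_one_zero hJ hR2 hlam1,
    AblowitzLadik.coeff12_pencil_apply_zero_one hJ hR2 hlam2,
    hf1, hf2, hgap21, hgap12]
  constructor <;> field_simp <;> ring
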